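/- Let d ≥ 1, λ₀ ∈ (0,1], and δ := λ₀/200. There exists a constant C, depending only on d and λ₀, such that for any a ∈ ℤ^d, k ∈ ℤ^d \ {0}, and t ≥ 10 with |a| ≤ |k|/8, one has ∫_{0.99t}^{t} K_a(t,k,s) ds ≤ C, where K_a(t,k,s) := |t−s| · exp(−δ⁴ |t−s| t^{−1/3} |k|^{−1/3} (1 + t|k|^{−2})^{−1/3−δ}) · exp(−δ | s|a| − (t−s)|k| |^{1/3}) · exp(−δ|a|^{1/3}/2). -/

import Mathlib

open MeasureTheory Real

noncomputable section

/-- The lattice vector `k ∈ ℤ^d` viewed as a point of `ℝ^d`. -/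
def latc {d : ℕ} (k : Fin d → ℤ) : EuclideanSpace ℝ (Fin d) :=
  (WithLp.equiv 2 (Fin d → ℝ)).symm fun i => (k i : ℝ)

/-- The kernel `K_a(t,k,s)`. -/
def Ker {d : ℕ} (δ : ℝ) (a k : Fin d → ℤ) (t s : ℝ) : ℝ :=
  |t - s| *
    Real.exp (-δ ^ 4 * |t - s| * t ^ (-(1:ℝ)/3) * ‖latc k‖ ^ (-(1:ℝ)/3) *
      (1 + t * ‖latc k‖ ^ (-(2:ℝ))) ^ (-(1:ℝ)/3 - δ)) *
    Real.exp (-δ * |s * ‖latc a‖ - (t - s) * ‖latc k‖| ^ ((1:ℝ)/3)) *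
    Real.exp (-δ * ‖latc a‖ ^ ((1:ℝ)/3) / 2)

lemma pow_mul_exp_neg_le (n : ℕ) {β y : ℝ} (hβ : 0 < β) (hy : 0 ≤ y) :
    y ^ n * Real.exp (-(β * y)) ≤ ((n:ℝ) / β) ^ n := by
  have hz : (0:ℝ) ≤ β * y := by positivity
  rcases Nat.eq_zero_or_pos n with hn | hn
  · subst hn
    simp only [pow_zero, one_mul]
    exact Real.exp_le_one_iff.mpr (by linarith)
  have hn' : (0:ℝ) < n := by exact_mod_cast hn
  have h1 : β * y / n ≤ Real.exp (β * y / n) :=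
    le_trans (by linarith [(by positivity : (0:ℝ) ≤ β * y / n)]) (Real.add_one_le_exp _)
  have h2 : (β * y / n) ^ n ≤ Real.exp (β * y) := by
    calc (β * y / n) ^ n ≤ Real.exp (β * y / n) ^ n := by
          apply pow_le_pow_left₀ (by positivity) h1
      _ = Real.exp (β * y) := by
          rw [← Real.exp_nat_mul]; congr 1; field_simp
  have key : y ^ n ≤ ((n:ℝ) / β) ^ n * Real.exp (β * y) := by
    rw [div_pow] at h2 ⊢
    rw [mul_pow] at h2
    have hβn : (0:ℝ) < β ^ n := by positivity
    have hnn : (0:ℝ) < (n:ℝ) ^ n := by positivity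
    rw [div_le_iff₀ hnn] at h2
    rw [div_mul_eq_mul_div, le_div_iff₀ hβn]
    nlinarith [h2]
  calc y ^ n * Real.exp (-(β*y))
      ≤ (((n:ℝ)/β)^n * Real.exp (β*y)) * Real.exp (-(β*y)) :=
        mul_le_mul_of_nonneg_right key (Real.exp_nonneg _)
    _ = ((n:ℝ)/β)^n := by rw [mul_assoc, ← Real.exp_add]; simp

lemma rpow_third_pow (x : ℝ) (hx : 0 ≤ x) (n : ℕ) :
    (x ^ ((1:ℝ)/3)) ^ n = x ^ ((n:ℝ)/3) := by
  rw [← Real.rpow_natCast (x ^ ((1:ℝ)/3)) n, ← Real.rpow_mul hx]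
  ring_nf

lemma exp_cube_le {δ : ℝ} (hδ : 0 < δ) (x : ℝ) :
    Real.exp (-(δ * |x| ^ ((1:ℝ)/3))) ≤ (1 + (6/δ)^6) * (1 + x^2)⁻¹ := by
  set y := |x| ^ ((1:ℝ)/3) with hy
  have hy0 : 0 ≤ y := Real.rpow_nonneg (abs_nonneg x) _
  have hx2 : x ^ 2 = y ^ 6 := by
    rw [hy, rpow_third_pow _ (abs_nonneg x)]
    norm_num
  have h1 : Real.exp (-(δ*y)) ≤ 1 := Real.exp_le_one_iff.mpr (by nlinarith)
  have h6 : y^6 * Real.exp (-(δ*y)) ≤ (6/δ)^6 := by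
    have := pow_mul_exp_neg_le 6 hδ hy0
    norm_num at this ⊢
    convert this using 2
  rw [← div_eq_mul_inv, le_div_iff₀ (by positivity)]
  nlinarith [Real.exp_nonneg (-(δ*y))]

lemma mul_exp_cube_le {δ : ℝ} (hδ : 0 < δ) {u : ℝ} (hu : 0 ≤ u) :
    u * Real.exp (-(δ * u ^ ((1:ℝ)/3))) ≤ ((3/δ)^3 + (9/δ)^9) * (1 + u^2)⁻¹ := by
  set y := u ^ ((1:ℝ)/3) with hy
  have hy0 : 0 ≤ y := Real.rpow_nonneg hu _
  have hu3 : u = y ^ 3 := by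
    rw [hy, rpow_third_pow _ hu]; norm_num
  have h3 : y^3 * Real.exp (-(δ*y)) ≤ (3/δ)^3 := by
    have := pow_mul_exp_neg_le 3 hδ hy0; norm_num at this ⊢; convert this using 2
  have h9 : y^9 * Real.exp (-(δ*y)) ≤ (9/δ)^9 := by
    have := pow_mul_exp_neg_le 9 hδ hy0; norm_num at this ⊢; convert this using 2
  rw [← div_eq_mul_inv, le_div_iff₀ (by positivity)]
  have key : u * Real.exp (-(δ*y)) * (1+u^2) = y^3 * Real.exp (-(δ*y)) + y^9 * Real.exp (-(δ*y)) := by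
    rw [hu3]; ring
  linarith

lemma one_le_norm_latc {d : ℕ} {k : Fin d → ℤ} (hk : k ≠ 0) : 1 ≤ ‖latc k‖ := by
  obtain ⟨i, hi⟩ : ∃ i, k i ≠ 0 := by
    by_contra h; push_neg at h; exact hk (funext h)
  have h1 : (1:ℝ) ≤ |(k i : ℝ)| := by
    rw [← Int.cast_abs]; exact_mod_cast Int.one_le_abs hi
  have h2 : |(k i : ℝ)| ≤ ‖latc k‖ := by
    rw [EuclideanSpace.norm_eq]
    rw [← Real.sqrt_sq (abs_nonneg ((k i : ℝ)))]
    apply Real.sqrt_le_sqrt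
    rw [sq_abs]
    exact Finset.single_le_sum (f := fun j => ‖(latc k) j‖^2) (fun j _ => by positivity)
      (Finset.mem_univ i) |>.trans_eq' (by simp [latc, WithLp.equiv])
  linarith

lemma latc_zero {d : ℕ} {a : Fin d → ℤ} (h : a = 0) : ‖latc a‖ = 0 := by
  subst h
  have : latc (0 : Fin d → ℤ) = 0 := by ext i; simp [latc]
  rw [this, norm_zero]

lemma lintegral_affine_cauchy (D m b : ℝ) (hD : 0 ≤ D) (hm : 0 < m) (S : Set ℝ) :
    ∫⁻ s in S, ENNReal.ofReal (D * (1 + (m*s + b)^2)⁻¹) ≤ ENNReal.ofReal (D * π / m) := by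
  have hint : Integrable (fun s : ℝ => D * (1 + (m*s + b)^2)⁻¹) := by
    have h0 : Integrable (fun x : ℝ => (1 + x^2)⁻¹) := integrable_inv_one_add_sq
    have h1 : Integrable (fun x : ℝ => (1 + (x + b)^2)⁻¹) := h0.comp_add_right b
    have h2 : Integrable (fun x : ℝ => (1 + (m*x + b)^2)⁻¹) := h1.comp_mul_left' hm.ne'
    exact h2.const_mul D
  have hval : (∫ s : ℝ, D * (1 + (m*s + b)^2)⁻¹) = D * π / m := by
    rw [integral_const_mul]
    have h3 : (∫ s : ℝ, (1 + (m*s + b)^2)⁻¹) = π / m := by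
      have h1 : (fun s : ℝ => (1 + (m*s + b)^2)⁻¹)
          = fun y : ℝ => ((fun x : ℝ => (1 + (x+b)^2)⁻¹)) (m * y) := rfl
      rw [h1, Measure.integral_comp_mul_left (fun x : ℝ => (1 + (x+b)^2)⁻¹) m]
      rw [integral_add_right_eq_self (fun x : ℝ => (1 + x^2)⁻¹) b]
      rw [integral_univ_inv_one_add_sq, abs_of_nonneg (inv_nonneg.2 hm.le), smul_eq_mul]
      ring
    rw [h3]; ring
  calc ∫⁻ s in S, ENNReal.ofReal (D * (1 + (m*s + b)^2)⁻¹)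
      ≤ ∫⁻ s, ENNReal.ofReal (D * (1 + (m*s + b)^2)⁻¹) := setLIntegral_le_lintegral _ _
    _ = ENNReal.ofReal (∫ s, D * (1 + (m*s+b)^2)⁻¹) :=
        (ofReal_integral_eq_lintegral_ofReal hint (ae_of_all _ fun s => by positivity)).symm
    _ = ENNReal.ofReal (D * π / m) := by rw [hval]

set_option maxHeartbeats 2000000 in
theorem stmt12 (d : ℕ) (hd : 1 ≤ d) (lam0 : ℝ) (h0 : 0 < lam0) (h1 : lam0 ≤ 1) :
    ∃ C : ℝ, 0 < C ∧ ∀ a k : Fin d → ℤ, k ≠ 0 → ∀ t : ℝ, 10 ≤ t →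
      ‖latc a‖ ≤ ‖latc k‖ / 8 →
      (∫⁻ s in Set.Ioc (0.99 * t) t, ENNReal.ofReal (Ker (lam0 / 200) a k t s))
        ≤ ENNReal.ofReal C := by
  have hπ := Real.pi_pos
  set δ := lam0 / 200 with hδdef
  have hδ0 : 0 < δ := by positivity
  have hδ1 : δ ≤ 1/200 := by rw [hδdef]; linarith
  set C2 : ℝ := 1 + (6/δ)^6 with hC2def
  have hC2pos : 0 < C2 := by positivity
  set Cc1 : ℝ := 2*C2*π/δ^4 with hCc1def
  set Cc2 : ℝ := ((3/δ)^3 + (9/δ)^9) * π with hCc2def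
  set Cs1 : ℝ := (12/δ)^6 with hCs1def
  set Cs2 : ℝ := 4/δ^4*C2*π*(120/δ^4)^12 with hCs2def
  have hCc1pos : 0 < Cc1 := by positivity
  have hCc2pos : 0 < Cc2 := by positivity
  have hCs1pos : 0 < Cs1 := by positivity
  have hCs2pos : 0 < Cs2 := by positivity
  refine ⟨Cc1 + Cc2 + Cs1 + Cs2, by positivity, ?_⟩
  intro a k hk t ht hak
  set K := ‖latc k‖ with hKdef
  set A := ‖latc a‖ with hAdef
  have hK1 : 1 ≤ K := one_le_norm_latc hk
  have hK0 : 0 < K := lt_of_lt_of_le one_pos hK1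
  have hA0 : 0 ≤ A := norm_nonneg _
  have ht0 : 0 < t := by linarith
  set c := δ^4 * t ^ (-(1:ℝ)/3) * K ^ (-(1:ℝ)/3) * (1 + t * K ^ (-(2:ℝ))) ^ (-(1:ℝ)/3 - δ)
    with hcdef
  have hKn2 : K ^ (-(2:ℝ)) = (K^2)⁻¹ := by
    rw [Real.rpow_neg hK0.le, Real.rpow_two]
  have hrr0 : 0 < 1 + t * K ^ (-(2:ℝ)) := by
    have : 0 < t * K ^ (-(2:ℝ)) := by
      apply mul_pos ht0 (Real.rpow_pos_of_pos hK0 _)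
    linarith
  have hc0 : 0 < c := by
    apply mul_pos (mul_pos (mul_pos (by positivity) (Real.rpow_pos_of_pos ht0 _))
      (Real.rpow_pos_of_pos hK0 _)) (Real.rpow_pos_of_pos hrr0 _)
  have hKer : ∀ s ∈ Set.Ioc (0.99*t) t, Ker δ a k t s =
      (t-s) * Real.exp (-(c*(t-s))) *
      Real.exp (-(δ * |s * A - (t - s) * K| ^ ((1:ℝ)/3))) *
      Real.exp (-(δ * A ^ ((1:ℝ)/3) / 2)) := by
    intro s hs
    have h1 : |t - s| = t - s := abs_of_nonneg (by linarith [hs.2])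
    simp only [Ker, h1, hcdef, ← hKdef, ← hAdef]
    ring_nf
  have hCle : ∀ x : ℝ, x ≤ Cc1 + Cc2 + Cs1 + Cs2 → x ≤ Cc1 + Cc2 + Cs1 + Cs2 := fun _ h => h
  by_cases ha : a = 0
  · -- Case A = 0
    have hA : A = 0 := latc_zero ha
    set C3 : ℝ := (3/δ)^3 + (9/δ)^9 with hC3def
    have hpt : ∀ s ∈ Set.Ioc (0.99*t) t, ENNReal.ofReal (Ker δ a k t s) ≤
        ENNReal.ofReal (C3 * (1 + ((1:ℝ)*s + (-t))^2)⁻¹) := by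
      intro s hs
      apply ENNReal.ofReal_le_ofReal
      rw [hKer s hs]
      have hu0 : (0:ℝ) ≤ t - s := by linarith [hs.2]
      have h2 : Real.exp (-(c*(t-s))) ≤ 1 :=
        Real.exp_le_one_iff.mpr (by nlinarith [mul_nonneg hc0.le hu0])
      have habs : |s * A - (t - s) * K| = (t-s)*K := by
        rw [hA, show s*(0:ℝ) - (t-s)*K = -((t-s)*K) by ring, abs_neg]
        exact abs_of_nonneg (mul_nonneg (by linarith [hs.2]) hK0.le)
      have h3 : Real.exp (-(δ * |s * A - (t - s) * K| ^ ((1:ℝ)/3))) ≤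
          Real.exp (-(δ * (t-s) ^ ((1:ℝ)/3))) := by
        rw [habs]
        apply Real.exp_le_exp.mpr
        apply neg_le_neg
        apply mul_le_mul_of_nonneg_left _ hδ0.le
        apply Real.rpow_le_rpow hu0 (le_mul_of_one_le_right hu0 hK1) (by norm_num)
      have h4 : Real.exp (-(δ * A ^ ((1:ℝ)/3) / 2)) = 1 := by
        rw [hA, Real.zero_rpow (by norm_num)]; simp
      have key : (t-s) * Real.exp (-(δ * (t-s) ^ ((1:ℝ)/3))) ≤ C3 * (1 + (t-s)^2)⁻¹ :=
        mul_exp_cube_le hδ0 hu0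
      have hfin : (1 + (t-s)^2)⁻¹ = (1 + ((1:ℝ)*s + (-t))^2)⁻¹ := by ring_nf
      calc (t-s) * Real.exp (-(c*(t-s))) *
            Real.exp (-(δ * |s * A - (t - s) * K| ^ ((1:ℝ)/3))) *
            Real.exp (-(δ * A ^ ((1:ℝ)/3) / 2))
          = (t-s) * Real.exp (-(c*(t-s))) *
            Real.exp (-(δ * |s * A - (t - s) * K| ^ ((1:ℝ)/3))) := by rw [h4, mul_one]
        _ ≤ (t-s) * 1 * Real.exp (-(δ * (t-s) ^ ((1:ℝ)/3))) := by
            apply mul_le_mul (by nlinarith [Real.exp_nonneg (-(c*(t-s)))]) h3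
              (Real.exp_nonneg _) (by linarith)
        _ = (t-s) * Real.exp (-(δ * (t-s) ^ ((1:ℝ)/3))) := by ring
        _ ≤ C3 * (1 + (t-s)^2)⁻¹ := key
        _ = C3 * (1 + ((1:ℝ)*s + (-t))^2)⁻¹ := by rw [hfin]
    calc ∫⁻ s in Set.Ioc (0.99*t) t, ENNReal.ofReal (Ker δ a k t s)
        ≤ ∫⁻ s in Set.Ioc (0.99*t) t, ENNReal.ofReal (C3 * (1 + ((1:ℝ)*s + (-t))^2)⁻¹) :=
          setLIntegral_mono' measurableSet_Ioc hpt
      _ ≤ ENNReal.ofReal (C3 * π / 1) :=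
          lintegral_affine_cauchy C3 1 (-t) (by positivity) one_pos _
      _ ≤ ENNReal.ofReal (Cc1 + Cc2 + Cs1 + Cs2) := by
          apply ENNReal.ofReal_le_ofReal
          rw [hCc2def, hC3def]
          nlinarith [hCc1pos, hCs1pos, hCs2pos]
  -- a ≠ 0
  have hA1 : 1 ≤ A := one_le_norm_latc ha
  by_cases hcase : t ≤ K^2
  · -- Case 1 : t ≤ K²
    -- rpow facts
    have hK23 : (K^2) ^ (-(1:ℝ)/3) = K ^ (-(2:ℝ)/3) := by
      rw [← Real.rpow_two, ← Real.rpow_mul hK0.le]; norm_num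
    have htinv : K ^ (-(2:ℝ)/3) ≤ t ^ (-(1:ℝ)/3) := by
      rw [← hK23]
      exact Real.rpow_le_rpow_of_nonpos ht0 hcase (by norm_num)
    have hKK : K ^ (-(2:ℝ)/3) * K ^ (-(1:ℝ)/3) = K⁻¹ := by
      rw [← Real.rpow_add hK0]
      norm_num [Real.rpow_neg_one]
    have hx1 : 1 + t * K ^ (-(2:ℝ)) ≤ 2 := by
      rw [hKn2]
      have : t * (K^2)⁻¹ ≤ 1 := by
        rw [← div_eq_mul_inv, div_le_one (by positivity)]; exact hcase
      linarith
    have hR : (1/2 : ℝ) ≤ (1 + t * K ^ (-(2:ℝ))) ^ (-(1:ℝ)/3 - δ) := by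
      have s1 : (2:ℝ) ^ (-(1:ℝ)/3 - δ) ≤ (1 + t * K ^ (-(2:ℝ))) ^ (-(1:ℝ)/3 - δ) :=
        Real.rpow_le_rpow_of_nonpos hrr0 hx1 (by linarith)
      have s2 : (1/2:ℝ) ≤ (2:ℝ) ^ (-(1:ℝ)/3 - δ) := by
        have := Real.rpow_le_rpow_of_exponent_le (one_le_two (α := ℝ)) (by linarith :
          (-1:ℝ) ≤ -(1:ℝ)/3 - δ)
        rw [Real.rpow_neg_one] at this
        linarith [this]
      linarith
    have hclb : δ^4/(2*K) ≤ c := by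
      have e2 : δ^4 * K ^ (-(2:ℝ)/3) * K ^ (-(1:ℝ)/3) ≤ δ^4 * t ^ (-(1:ℝ)/3) * K ^ (-(1:ℝ)/3) :=
        mul_le_mul_of_nonneg_right (mul_le_mul_of_nonneg_left htinv (by positivity))
          (Real.rpow_nonneg hK0.le _)
      have e3 : δ^4 * K ^ (-(2:ℝ)/3) * K ^ (-(1:ℝ)/3) * (1/2) ≤ c := by
        rw [hcdef]
        apply mul_le_mul e2 hR (by norm_num)
        positivity
      have e4 : δ^4 * K ^ (-(2:ℝ)/3) * K ^ (-(1:ℝ)/3) * (1/2) = δ^4/(2*K) := by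
        rw [mul_assoc (δ^4), hKK]
        field_simp
      linarith [e3, e4.symm.le]
    have hcinv : 1/c ≤ 2*K/δ^4 := by
      have := one_div_le_one_div_of_le (by positivity) hclb
      rwa [one_div_div] at this
    set D1 : ℝ := 2*C2*K/δ^4 with hD1def
    have hpt : ∀ s ∈ Set.Ioc (0.99*t) t, ENNReal.ofReal (Ker δ a k t s) ≤
        ENNReal.ofReal (D1 * (1 + ((A+K)*s + (-(t*K)))^2)⁻¹) := by
      intro s hs
      apply ENNReal.ofReal_le_ofReal
      rw [hKer s hs, show s * A - (t - s) * K = (A+K)*s + (-(t*K)) by ring]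
      have hu0 : (0:ℝ) ≤ t - s := by linarith [hs.2]
      have h12 : (t-s) * Real.exp (-(c*(t-s))) ≤ 2*K/δ^4 := by
        have hb := pow_mul_exp_neg_le 1 hc0 hu0
        simp only [pow_one, Nat.cast_one] at hb
        calc (t-s) * Real.exp (-(c*(t-s))) ≤ 1/c := hb
          _ ≤ 2*K/δ^4 := hcinv
      have h3 : Real.exp (-(δ * |(A+K)*s + (-(t*K))| ^ ((1:ℝ)/3))) ≤
          C2 * (1 + ((A+K)*s + (-(t*K)))^2)⁻¹ := by
        rw [hC2def]; exact exp_cube_le hδ0 _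
      have h4 : Real.exp (-(δ * A ^ ((1:ℝ)/3) / 2)) ≤ 1 :=
        Real.exp_le_one_iff.mpr (neg_nonpos.mpr (by positivity))
      calc (t-s) * Real.exp (-(c*(t-s))) *
            Real.exp (-(δ * |(A+K)*s + (-(t*K))| ^ ((1:ℝ)/3))) *
            Real.exp (-(δ * A ^ ((1:ℝ)/3) / 2))
          ≤ (2*K/δ^4) * (C2 * (1 + ((A+K)*s + (-(t*K)))^2)⁻¹) * 1 := by
            apply mul_le_mul _ h4 (Real.exp_nonneg _) (by positivity)
            apply mul_le_mul h12 h3 (Real.exp_nonneg _)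
            positivity
        _ = D1 * (1 + ((A+K)*s + (-(t*K)))^2)⁻¹ := by rw [hD1def]; ring
    calc ∫⁻ s in Set.Ioc (0.99*t) t, ENNReal.ofReal (Ker δ a k t s)
        ≤ ∫⁻ s in Set.Ioc (0.99*t) t,
            ENNReal.ofReal (D1 * (1 + ((A+K)*s + (-(t*K)))^2)⁻¹) :=
          setLIntegral_mono' measurableSet_Ioc hpt
      _ ≤ ENNReal.ofReal (D1 * π / (A+K)) :=
          lintegral_affine_cauchy D1 (A+K) (-(t*K)) (by positivity) (by linarith) _
      _ ≤ ENNReal.ofReal (Cc1 + Cc2 + Cs1 + Cs2) := by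
          apply ENNReal.ofReal_le_ofReal
          have d1 : D1 * π / (A+K) ≤ D1 * π / K :=
            div_le_div_of_nonneg_left (by positivity) hK0 (by linarith)
          have d2 : D1 * π / K = Cc1 := by
            rw [hD1def, hCc1def]
            field_simp
          linarith [hCc2pos, hCs1pos, hCs2pos]
  · -- Case 3 : K² < t, A ≥ 1
    push_neg at hcase
    set r := t / K^2 with hrdef
    have hr0 : 0 < r := by positivity
    have hr1 : 1 ≤ r := by
      rw [hrdef]; rw [le_div_iff₀ (by positivity)]; linarith
    have hrK : t * K ^ (-(2:ℝ)) = r := by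
      rw [hKn2, hrdef]; ring
    have htr : t = r * K^2 := by
      rw [hrdef]; field_simp
    set c0 := δ^4 * t ^ (-(1:ℝ)/3) * K ^ (-(1:ℝ)/3) * (2*r) ^ (-(1:ℝ)/2) with hc0def
    have hc00 : 0 < c0 := by
      apply mul_pos (mul_pos (mul_pos (by positivity) (Real.rpow_pos_of_pos ht0 _))
        (Real.rpow_pos_of_pos hK0 _)) (Real.rpow_pos_of_pos (by positivity) _)
    have hcc : c0 ≤ c := by
      have s1 : (2*r) ^ (-(1:ℝ)/3 - δ) ≤ (1 + t * K ^ (-(2:ℝ))) ^ (-(1:ℝ)/3 - δ) := by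
        apply Real.rpow_le_rpow_of_nonpos hrr0 _ (by linarith)
        rw [hrK]; linarith
      have s2 : (2*r) ^ (-(1:ℝ)/2) ≤ (2*r) ^ (-(1:ℝ)/3 - δ) :=
        Real.rpow_le_rpow_of_exponent_le (by linarith) (by linarith)
      rw [hc0def, hcdef]
      apply mul_le_mul_of_nonneg_left (s2.trans s1)
      positivity
    -- the sets
    set S1 : Set ℝ := {s : ℝ | t*A/2 ≤ |s * A - (t - s) * K|} with hS1def
    set S2 : Set ℝ := {s : ℝ | 0.49*t*A ≤ (t-s)*K} with hS2def
    have hS1m : MeasurableSet S1 := by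
      rw [hS1def]
      apply measurableSet_le measurable_const
      apply Measurable.abs
      fun_prop
    have hS2m : MeasurableSet S2 := by
      rw [hS2def]
      apply measurableSet_le measurable_const
      fun_prop
    have hcover : Set.Ioc (0.99*t) t ⊆
        (Set.Ioc (0.99*t) t ∩ S1) ∪ (Set.Ioc (0.99*t) t ∩ S2) := by
      intro s hs
      by_cases h : t*A/2 ≤ |s * A - (t - s) * K|
      · exact Or.inl ⟨hs, h⟩
      · right
        refine ⟨hs, ?_⟩
        push_neg at h
        have l1 := le_abs_self (s * A - (t - s) * K)
        have l2 : 0.99*t*A ≤ s*A := mul_le_mul_of_nonneg_right hs.1.le hA0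
        show 0.49*t*A ≤ (t-s)*K
        linarith
    -- S1 piece
    have hpt1 : ∀ s ∈ Set.Ioc (0.99*t) t ∩ S1, ENNReal.ofReal (Ker δ a k t s) ≤
        ENNReal.ofReal (t * Real.exp (-(δ/2 * t ^ ((1:ℝ)/3)))) := by
      intro s hs
      obtain ⟨hsI, hsS⟩ := hs
      apply ENNReal.ofReal_le_ofReal
      rw [hKer s hsI]
      have hu0 : (0:ℝ) ≤ t - s := by linarith [hsI.2]
      have h2 : Real.exp (-(c*(t-s))) ≤ 1 :=
        Real.exp_le_one_iff.mpr (neg_nonpos.mpr (mul_nonneg hc0.le hu0))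
      have h4 : Real.exp (-(δ * A ^ ((1:ℝ)/3) / 2)) ≤ 1 :=
        Real.exp_le_one_iff.mpr (neg_nonpos.mpr (by positivity))
      have habs : t*A/2 ≤ |s * A - (t - s) * K| := hsS
      have h3 : Real.exp (-(δ * |s * A - (t - s) * K| ^ ((1:ℝ)/3))) ≤
          Real.exp (-(δ/2 * t ^ ((1:ℝ)/3))) := by
        apply Real.exp_le_exp.mpr
        apply neg_le_neg
        have r1 : (t/2) ^ ((1:ℝ)/3) ≤ (t*A/2) ^ ((1:ℝ)/3) := by
          apply Real.rpow_le_rpow (by positivity) (by nlinarith) (by norm_num)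
        have r2 : (t*A/2) ^ ((1:ℝ)/3) ≤ |s * A - (t - s) * K| ^ ((1:ℝ)/3) :=
          Real.rpow_le_rpow (by positivity) habs (by norm_num)
        have r3 : (t/2) ^ ((1:ℝ)/3) = t ^ ((1:ℝ)/3) / 2 ^ ((1:ℝ)/3) :=
          Real.div_rpow ht0.le (by norm_num : (0:ℝ) ≤ 2) ((1:ℝ)/3)
        have r4 : (2:ℝ) ^ ((1:ℝ)/3) ≤ 2 := by
          have := Real.rpow_le_rpow_of_exponent_le (one_le_two (α := ℝ))
            (by norm_num : (1:ℝ)/3 ≤ 1)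
          rwa [Real.rpow_one] at this
        have r5 : t ^ ((1:ℝ)/3) / 2 ≤ t ^ ((1:ℝ)/3) / 2 ^ ((1:ℝ)/3) := by
          apply div_le_div_of_nonneg_left (Real.rpow_nonneg ht0.le _) _ r4
          positivity
        calc δ/2 * t ^ ((1:ℝ)/3) = δ * (t ^ ((1:ℝ)/3) / 2) := by ring
          _ ≤ δ * |s * A - (t - s) * K| ^ ((1:ℝ)/3) := by
              apply mul_le_mul_of_nonneg_left _ hδ0.le
              calc t ^ ((1:ℝ)/3) / 2 ≤ t ^ ((1:ℝ)/3) / 2 ^ ((1:ℝ)/3) := r5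
                _ = (t/2) ^ ((1:ℝ)/3) := r3.symm
                _ ≤ (t*A/2) ^ ((1:ℝ)/3) := r1
                _ ≤ _ := r2
      calc (t-s) * Real.exp (-(c*(t-s))) *
            Real.exp (-(δ * |s * A - (t - s) * K| ^ ((1:ℝ)/3))) *
            Real.exp (-(δ * A ^ ((1:ℝ)/3) / 2))
          ≤ (t * 1) * Real.exp (-(δ/2 * t ^ ((1:ℝ)/3))) * 1 := by
            apply mul_le_mul _ h4 (Real.exp_nonneg _) (by positivity)
            apply mul_le_mul _ h3 (Real.exp_nonneg _) (by positivity)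
            apply mul_le_mul (by linarith [hsI.1]) h2 (Real.exp_nonneg _) ht0.le
        _ = t * Real.exp (-(δ/2 * t ^ ((1:ℝ)/3))) := by ring
    have p1 : (∫⁻ s in Set.Ioc (0.99*t) t ∩ S1, ENNReal.ofReal (Ker δ a k t s))
        ≤ ENNReal.ofReal Cs1 := by
      calc ∫⁻ s in Set.Ioc (0.99*t) t ∩ S1, ENNReal.ofReal (Ker δ a k t s)
          ≤ ∫⁻ _ in Set.Ioc (0.99*t) t ∩ S1,
              ENNReal.ofReal (t * Real.exp (-(δ/2 * t ^ ((1:ℝ)/3)))) :=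
            setLIntegral_mono' (measurableSet_Ioc.inter hS1m) hpt1
        _ = ENNReal.ofReal (t * Real.exp (-(δ/2 * t ^ ((1:ℝ)/3)))) *
              volume (Set.Ioc (0.99*t) t ∩ S1) := setLIntegral_const _ _
        _ ≤ ENNReal.ofReal (t * Real.exp (-(δ/2 * t ^ ((1:ℝ)/3)))) *
              volume (Set.Ioc (0.99*t) t) := by
            apply mul_le_mul_right (measure_mono Set.inter_subset_left)
        _ = ENNReal.ofReal (t * Real.exp (-(δ/2 * t ^ ((1:ℝ)/3)))) *
              ENNReal.ofReal (t - 0.99*t) := by rw [Real.volume_Ioc]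
        _ = ENNReal.ofReal (t * Real.exp (-(δ/2 * t ^ ((1:ℝ)/3))) * (t - 0.99*t)) := by
            rw [← ENNReal.ofReal_mul (by positivity)]
        _ ≤ ENNReal.ofReal Cs1 := by
            apply ENNReal.ofReal_le_ofReal
            have hy6 : (t ^ ((1:ℝ)/3))^6 = t^2 := by
              rw [rpow_third_pow t ht0.le 6, show ((6:ℕ):ℝ)/3 = (2:ℝ) by norm_num,
                Real.rpow_two]
            have h6 := pow_mul_exp_neg_le 6 (show (0:ℝ) < δ/2 by positivity)
              (Real.rpow_nonneg ht0.le ((1:ℝ)/3))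
            rw [hy6] at h6
            have h6' : t^2 * Real.exp (-(δ/2 * t ^ ((1:ℝ)/3))) ≤ (12/δ)^6 := by
              calc t^2 * Real.exp (-(δ/2 * t ^ ((1:ℝ)/3))) ≤ ((6:ℕ)/(δ/2))^6 := h6
                _ = (12/δ)^6 := by
                    congr 1
                    rw [div_eq_div_iff (by positivity) (by positivity)]
                    push_cast; ring
            rw [hCs1def]
            nlinarith [Real.exp_nonneg (-(δ/2 * t ^ ((1:ℝ)/3))), ht0,
              mul_nonneg ht0.le (Real.exp_nonneg (-(δ/2 * t ^ ((1:ℝ)/3))))]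
    -- S2 piece
    set X := t ^ ((1:ℝ)/3) * K ^ ((1:ℝ)/3) * (2*r) ^ ((1:ℝ)/2) with hXdef
    have hXpos : 0 < X := by
      apply mul_pos (mul_pos (Real.rpow_pos_of_pos ht0 _) (Real.rpow_pos_of_pos hK0 _))
        (Real.rpow_pos_of_pos (by positivity) _)
    have ptt : t ^ (-(1:ℝ)/3) * t ^ ((1:ℝ)/3) = 1 := by
      rw [← Real.rpow_add ht0]; norm_num
    have pKK : K ^ (-(1:ℝ)/3) * K ^ ((1:ℝ)/3) = 1 := by
      rw [← Real.rpow_add hK0]; norm_num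
    have p2r : (2*r) ^ (-(1:ℝ)/2) * (2*r) ^ ((1:ℝ)/2) = 1 := by
      rw [← Real.rpow_add (by positivity : (0:ℝ) < 2*r)]; norm_num
    have hc0X : c0 * X = δ^4 := by
      rw [hc0def, hXdef]
      calc δ^4 * t ^ (-(1:ℝ)/3) * K ^ (-(1:ℝ)/3) * (2*r) ^ (-(1:ℝ)/2) *
            (t ^ ((1:ℝ)/3) * K ^ ((1:ℝ)/3) * (2*r) ^ ((1:ℝ)/2))
          = δ^4 * (t ^ (-(1:ℝ)/3) * t ^ ((1:ℝ)/3)) * (K ^ (-(1:ℝ)/3) * K ^ ((1:ℝ)/3)) *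
            ((2*r) ^ (-(1:ℝ)/2) * (2*r) ^ ((1:ℝ)/2)) := by ring
        _ = δ^4 := by rw [ptt, pKK, p2r]; ring
    have h2c0 : 2/c0 = 2*X/δ^4 := by
      rw [div_eq_div_iff hc00.ne' (by positivity : (δ^4:ℝ) ≠ 0)]
      linear_combination (-2 : ℝ) * hc0X
    have hK23' : (K^2) ^ ((1:ℝ)/3) = K ^ ((2:ℝ)/3) := by
      rw [← Real.rpow_two, ← Real.rpow_mul hK0.le]; norm_num
    have ht13 : t ^ ((1:ℝ)/3) * K ^ ((1:ℝ)/3) = r ^ ((1:ℝ)/3) * K := by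
      have e1 : t ^ ((1:ℝ)/3) = r ^ ((1:ℝ)/3) * K ^ ((2:ℝ)/3) := by
        calc t ^ ((1:ℝ)/3) = (r * K^2) ^ ((1:ℝ)/3) := by rw [← htr]
          _ = r ^ ((1:ℝ)/3) * (K^2) ^ ((1:ℝ)/3) := Real.mul_rpow hr0.le (by positivity)
          _ = r ^ ((1:ℝ)/3) * K ^ ((2:ℝ)/3) := by rw [hK23']
      have e2 : K ^ ((2:ℝ)/3) * K ^ ((1:ℝ)/3) = K := by
        rw [← Real.rpow_add hK0]; norm_num
      rw [e1, mul_assoc, e2]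
    have h2rle : (2*r) ^ ((1:ℝ)/2) ≤ 2*r := by
      have := Real.rpow_le_rpow_of_exponent_le (by linarith : (1:ℝ) ≤ 2*r)
        (by norm_num : (1:ℝ)/2 ≤ 1)
      rwa [Real.rpow_one] at this
    have hr13le : r ^ ((1:ℝ)/3) ≤ r := by
      have := Real.rpow_le_rpow_of_exponent_le hr1 (by norm_num : (1:ℝ)/3 ≤ 1)
      rwa [Real.rpow_one] at this
    have hX2 : X ≤ 2*K*r^2 := by
      rw [hXdef, ht13]
      calc r ^ ((1:ℝ)/3) * K * (2*r) ^ ((1:ℝ)/2) ≤ r * K * (2*r) := by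
            apply mul_le_mul (mul_le_mul hr13le le_rfl hK0.le (by linarith)) h2rle
              (Real.rpow_nonneg (by positivity) _) (by positivity)
        _ = 2*K*r^2 := by ring
    have hc0u1 : c0 * (0.49*t*A/K) = 0.49*A*δ^4 * r ^ ((1:ℝ)/6) * 2 ^ (-(1:ℝ)/2) := by
      have tt2 : t ^ (-(1:ℝ)/3) * t = t ^ ((2:ℝ)/3) := by
        rw [show ((2:ℝ)/3) = -(1:ℝ)/3 + 1 by norm_num, Real.rpow_add ht0, Real.rpow_one]
      have kk2 : K ^ (-(1:ℝ)/3) / K = K ^ (-(4:ℝ)/3) := by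
        rw [show (-(4:ℝ)/3) = -(1:ℝ)/3 + (-1:ℝ) by norm_num, Real.rpow_add hK0,
          Real.rpow_neg_one, div_eq_mul_inv]
      have e23 : t ^ ((2:ℝ)/3) = r ^ ((2:ℝ)/3) * K ^ ((4:ℝ)/3) := by
        calc t ^ ((2:ℝ)/3) = (r * K^2) ^ ((2:ℝ)/3) := by rw [← htr]
          _ = r ^ ((2:ℝ)/3) * (K^2) ^ ((2:ℝ)/3) := Real.mul_rpow hr0.le (by positivity)
          _ = r ^ ((2:ℝ)/3) * K ^ ((4:ℝ)/3) := by
              rw [← Real.rpow_two, ← Real.rpow_mul hK0.le]; norm_num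
      have k43 : K ^ ((4:ℝ)/3) * K ^ (-(4:ℝ)/3) = 1 := by
        rw [← Real.rpow_add hK0]; norm_num
      have r2r : (2*r) ^ (-(1:ℝ)/2) = 2 ^ (-(1:ℝ)/2) * r ^ (-(1:ℝ)/2) :=
        Real.mul_rpow (by norm_num) hr0.le
      have rr : r ^ ((2:ℝ)/3) * r ^ (-(1:ℝ)/2) = r ^ ((1:ℝ)/6) := by
        rw [← Real.rpow_add hr0]; norm_num
      calc c0 * (0.49*t*A/K)
          = 0.49*A*δ^4 * (t ^ (-(1:ℝ)/3) * t) * (K ^ (-(1:ℝ)/3) / K) *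
            ((2*r) ^ (-(1:ℝ)/2)) := by rw [hc0def]; ring
        _ = 0.49*A*δ^4 * (r ^ ((2:ℝ)/3) * K ^ ((4:ℝ)/3)) * K ^ (-(4:ℝ)/3) *
            (2 ^ (-(1:ℝ)/2) * r ^ (-(1:ℝ)/2)) := by rw [tt2, kk2, e23, r2r]
        _ = 0.49*A*δ^4 * (r ^ ((2:ℝ)/3) * r ^ (-(1:ℝ)/2)) *
            (K ^ ((4:ℝ)/3) * K ^ (-(4:ℝ)/3)) * 2 ^ (-(1:ℝ)/2) := by ring
        _ = 0.49*A*δ^4 * r ^ ((1:ℝ)/6) * 2 ^ (-(1:ℝ)/2) := by rw [rr, k43]; ring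
    have h2half : (1/2:ℝ) ≤ 2 ^ (-(1:ℝ)/2) := by
      have := Real.rpow_le_rpow_of_exponent_le (one_le_two (α := ℝ))
        (by norm_num : (-1:ℝ) ≤ -(1:ℝ)/2)
      rw [Real.rpow_neg_one] at this
      linarith
    have hr16pos : 0 < r ^ ((1:ℝ)/6) := Real.rpow_pos_of_pos hr0 _
    have hδ4 : (0:ℝ) < δ^4 := by positivity
    have hcu : 0.1*δ^4 * r ^ ((1:ℝ)/6) ≤ (c0/2) * (0.49*t*A/K) := by
      have key : 0.2*δ^4 * r ^ ((1:ℝ)/6) ≤ c0 * (0.49*t*A/K) := by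
        rw [hc0u1]
        have hy0 : (0:ℝ) ≤ r ^ ((1:ℝ)/6) := hr16pos.le
        have hw0 : (0:ℝ) ≤ 2 ^ (-(1:ℝ)/2) := le_trans (by norm_num) h2half
        have s1 : 0.2*δ^4* r ^ ((1:ℝ)/6) ≤ (0.49*δ^4*r ^ ((1:ℝ)/6))*(1/2) := by
          have h := mul_le_mul_of_nonneg_right (by norm_num : (0.2:ℝ) ≤ 0.245)
            (mul_nonneg hδ4.le hy0)
          calc 0.2*δ^4*r ^ ((1:ℝ)/6) = 0.2*(δ^4*r ^ ((1:ℝ)/6)) := by ring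
            _ ≤ 0.245*(δ^4*r ^ ((1:ℝ)/6)) := h
            _ = (0.49*δ^4*r ^ ((1:ℝ)/6))*(1/2) := by ring
        have s3 : (0.49*δ^4*r ^ ((1:ℝ)/6))*(1/2) ≤
            (0.49*δ^4*r ^ ((1:ℝ)/6))*(2 ^ (-(1:ℝ)/2)) :=
          mul_le_mul_of_nonneg_left h2half (by positivity)
        have s4 : (0.49*δ^4*r ^ ((1:ℝ)/6))*(2 ^ (-(1:ℝ)/2)) ≤
            A*((0.49*δ^4*r ^ ((1:ℝ)/6))*(2 ^ (-(1:ℝ)/2))) :=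
          le_mul_of_one_le_left (mul_nonneg (by positivity) hw0) hA1
        calc 0.2*δ^4*r ^ ((1:ℝ)/6) ≤ (0.49*δ^4*r ^ ((1:ℝ)/6))*(1/2) := s1
          _ ≤ (0.49*δ^4*r ^ ((1:ℝ)/6))*(2 ^ (-(1:ℝ)/2)) := s3
          _ ≤ A*((0.49*δ^4*r ^ ((1:ℝ)/6))*(2 ^ (-(1:ℝ)/2))) := s4
          _ = 0.49*A*δ^4 * r ^ ((1:ℝ)/6) * 2 ^ (-(1:ℝ)/2) := by ring
      linarith
    set EE := Real.exp (-(0.1*δ^4 * r ^ ((1:ℝ)/6))) with hEEdef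
    have hEE0 : (0:ℝ) ≤ EE := Real.exp_nonneg _
    set D2 := 4*C2*K*r^2*EE/δ^4 with hD2def
    have hD2nn : (0:ℝ) ≤ D2 := by
      rw [hD2def]
      apply div_nonneg (mul_nonneg (by positivity) hEE0) hδ4.le
    have hpt2 : ∀ s ∈ Set.Ioc (0.99*t) t ∩ S2, ENNReal.ofReal (Ker δ a k t s) ≤
        ENNReal.ofReal (D2 * (1 + ((A+K)*s + (-(t*K)))^2)⁻¹) := by
      intro s hs
      obtain ⟨hsI, hsS⟩ := hs
      have hsS' : 0.49*t*A ≤ (t-s)*K := hsS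
      apply ENNReal.ofReal_le_ofReal
      rw [hKer s hsI, show s * A - (t - s) * K = (A+K)*s + (-(t*K)) by ring]
      have hu0 : (0:ℝ) ≤ t - s := by linarith [hsI.2]
      have hu1le : 0.49*t*A/K ≤ t - s := by
        rw [div_le_iff₀ hK0]; exact hsS'
      have hF12 : (t-s) * Real.exp (-(c*(t-s))) ≤ 4*K*r^2*EE/δ^4 := by
        have m1 : Real.exp (-(c*(t-s))) ≤ Real.exp (-(c0*(t-s))) :=
          Real.exp_le_exp.mpr (neg_le_neg (mul_le_mul_of_nonneg_right hcc hu0))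
        have m2 : Real.exp (-(c0*(t-s))) =
            Real.exp (-((c0/2)*(t-s))) * Real.exp (-((c0/2)*(t-s))) := by
          rw [← Real.exp_add]; congr 1; ring
        have m3 : (t-s) * Real.exp (-((c0/2)*(t-s))) ≤ 2/c0 := by
          have hb := pow_mul_exp_neg_le 1 (half_pos hc00) hu0
          simp only [pow_one, Nat.cast_one] at hb
          have hd : (1:ℝ)/(c0/2) = 2/c0 := by
            rw [one_div_div]
          rw [← hd]
          exact hb
        have m4 : Real.exp (-((c0/2)*(t-s))) ≤ EE := by
          rw [hEEdef]
          apply Real.exp_le_exp.mpr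
          apply neg_le_neg
          calc 0.1*δ^4 * r ^ ((1:ℝ)/6) ≤ (c0/2) * (0.49*t*A/K) := hcu
            _ ≤ (c0/2)*(t-s) := mul_le_mul_of_nonneg_left hu1le (half_pos hc00).le
        calc (t-s) * Real.exp (-(c*(t-s)))
            ≤ (t-s) * Real.exp (-(c0*(t-s))) := mul_le_mul_of_nonneg_left m1 hu0
          _ = ((t-s) * Real.exp (-((c0/2)*(t-s)))) * Real.exp (-((c0/2)*(t-s))) := by
              rw [m2]; ring
          _ ≤ (2/c0) * EE :=
              mul_le_mul m3 m4 (Real.exp_nonneg _) (div_nonneg (by norm_num) hc00.le)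
          _ = (2*X/δ^4) * EE := by rw [h2c0]
          _ ≤ (2*(2*K*r^2)/δ^4) * EE := by
              apply mul_le_mul_of_nonneg_right _ hEE0
              apply (div_le_div_iff_of_pos_right hδ4).mpr
              linarith [hX2]
          _ = 4*K*r^2*EE/δ^4 := by ring
      have h3 : Real.exp (-(δ * |(A+K)*s + (-(t*K))| ^ ((1:ℝ)/3))) ≤
          C2 * (1 + ((A+K)*s + (-(t*K)))^2)⁻¹ := by
        rw [hC2def]; exact exp_cube_le hδ0 _
      have h4 : Real.exp (-(δ * A ^ ((1:ℝ)/3) / 2)) ≤ 1 :=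
        Real.exp_le_one_iff.mpr (neg_nonpos.mpr (by positivity))
      calc (t-s) * Real.exp (-(c*(t-s))) *
            Real.exp (-(δ * |(A+K)*s + (-(t*K))| ^ ((1:ℝ)/3))) *
            Real.exp (-(δ * A ^ ((1:ℝ)/3) / 2))
          ≤ (4*K*r^2*EE/δ^4) * (C2 * (1 + ((A+K)*s + (-(t*K)))^2)⁻¹) * 1 := by
            apply mul_le_mul _ h4 (Real.exp_nonneg _) _
            · apply mul_le_mul hF12 h3 (Real.exp_nonneg _)
              apply div_nonneg (mul_nonneg (by positivity) hEE0) hδ4.le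
            · apply mul_nonneg (div_nonneg (mul_nonneg (by positivity) hEE0) hδ4.le)
              positivity
        _ = D2 * (1 + ((A+K)*s + (-(t*K)))^2)⁻¹ := by rw [hD2def]; ring
    have p2 : (∫⁻ s in Set.Ioc (0.99*t) t ∩ S2, ENNReal.ofReal (Ker δ a k t s))
        ≤ ENNReal.ofReal Cs2 := by
      calc ∫⁻ s in Set.Ioc (0.99*t) t ∩ S2, ENNReal.ofReal (Ker δ a k t s)
          ≤ ∫⁻ s in Set.Ioc (0.99*t) t ∩ S2,
              ENNReal.ofReal (D2 * (1 + ((A+K)*s + (-(t*K)))^2)⁻¹) :=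
            setLIntegral_mono' (measurableSet_Ioc.inter hS2m) hpt2
        _ ≤ ENNReal.ofReal (D2 * π / (A+K)) :=
            lintegral_affine_cauchy D2 (A+K) (-(t*K)) hD2nn (by linarith) _
        _ ≤ ENNReal.ofReal Cs2 := by
            apply ENNReal.ofReal_le_ofReal
            have hy12 : (r ^ ((1:ℝ)/6))^12 = r^2 := by
              rw [← Real.rpow_natCast (r ^ ((1:ℝ)/6)) 12, ← Real.rpow_mul hr0.le]
              norm_num [Real.rpow_two]
            have h12 := pow_mul_exp_neg_le 12 (show (0:ℝ) < 0.1*δ^4 by positivity)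
              (Real.rpow_nonneg hr0.le ((1:ℝ)/6))
            rw [hy12] at h12
            have hconst : (((12:ℕ):ℝ)/(0.1*δ^4))^12 = (120/δ^4)^12 := by
              congr 1
              rw [div_eq_div_iff (by positivity) (by positivity)]
              push_cast; ring
            have hrEE : r^2 * EE ≤ (120/δ^4)^12 := by
              rw [hEEdef]
              calc r^2 * Real.exp (-(0.1*δ^4 * r ^ ((1:ℝ)/6)))
                  ≤ (((12:ℕ):ℝ)/(0.1*δ^4))^12 := h12
                _ = (120/δ^4)^12 := hconst
            have d1 : D2 * π / (A+K) ≤ D2 * π / K :=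
              div_le_div_of_nonneg_left (mul_nonneg hD2nn hπ.le) hK0 (by linarith)
            have d2 : D2 * π / K = 4*C2*r^2*EE*π/δ^4 := by
              rw [hD2def]; field_simp
            have d3 : 4*C2*r^2*EE*π/δ^4 ≤ Cs2 := by
              rw [hCs2def]
              have hfac : (0:ℝ) ≤ 4*C2*π/δ^4 := by positivity
              calc 4*C2*r^2*EE*π/δ^4 = (4*C2*π/δ^4) * (r^2*EE) := by ring
                _ ≤ (4*C2*π/δ^4) * ((120/δ^4)^12) := mul_le_mul_of_nonneg_left hrEE hfac
                _ = 4/δ^4*C2*π*(120/δ^4)^12 := by ring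
            exact (d1.trans d2.le).trans d3
    calc ∫⁻ s in Set.Ioc (0.99*t) t, ENNReal.ofReal (Ker δ a k t s)
        ≤ ∫⁻ s in (Set.Ioc (0.99*t) t ∩ S1) ∪ (Set.Ioc (0.99*t) t ∩ S2),
            ENNReal.ofReal (Ker δ a k t s) := lintegral_mono_set hcover
      _ ≤ (∫⁻ s in Set.Ioc (0.99*t) t ∩ S1, ENNReal.ofReal (Ker δ a k t s)) +
          (∫⁻ s in Set.Ioc (0.99*t) t ∩ S2, ENNReal.ofReal (Ker δ a k t s)) :=
            lintegral_union_le _ _ _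
      _ ≤ ENNReal.ofReal Cs1 + ENNReal.ofReal Cs2 := add_le_add p1 p2
      _ = ENNReal.ofReal (Cs1 + Cs2) := (ENNReal.ofReal_add hCs1pos.le hCs2pos.le).symm
      _ ≤ ENNReal.ofReal (Cc1 + Cc2 + Cs1 + Cs2) :=
          ENNReal.ofReal_le_ofReal (by linarith)
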